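/- arXiv:1412.5947 — 3 statements merged into one kernel-verified Lean document; each statement's English description precedes it below -/
import Mathlib

section
/- Let h : 𝔻 → ℂ be holomorphic on the open unit disc with Re h(w) ≥ 0 for all w ∈ 𝔻. Then for every m ≥ 1, |h^(m)(0)/m!| ≤ 2 Re h(0). -/
/-!
For `0 < r < 1`, Cauchy's formula writes `h⁽ᵐ⁾(0) / m!` as the average of `z⁻ᵐ h(z)` over the
circle `|z| = r`. For `m ≥ 1` the average of `z⁻ᵐ conj (h z)` vanishes: on the circle
`z⁻¹ = conj z / r²`, so it is the conjugate of `r⁻²ᵐ` times the average of `zᵐ h(z)`, which is `0`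
by the mean value property. Adding it replaces `h` by `2 Re h ≥ 0` in the integrand, whence
`|h⁽ᵐ⁾(0) / m!| ≤ r⁻ᵐ · 2 · avg (Re h) = 2 r⁻ᵐ Re h(0)`; let `r → 1`.
-/

open Complex Metric Real ComplexConjugate Filter Topology

section CircleAverage

variable {f : ℂ → ℂ} {c : ℂ} {r : ℝ}

theorem norm_circleAverage_le_circleAverage_norm {E : Type*} [NormedAddCommGroup E]
    [NormedSpace ℝ E] (g : ℂ → E) (c : ℂ) (R : ℝ) :
    ‖circleAverage g c R‖ ≤ circleAverage (fun z ↦ ‖g z‖) c R := by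
  rw [circleAverage, circleAverage, norm_smul, smul_eq_mul,
    Real.norm_of_nonneg (inv_pos.2 two_pi_pos).le]
  gcongr
  exact intervalIntegral.norm_integral_le_integral_norm two_pi_pos.le

theorem circleAverage_conj (g : ℂ → ℂ) (c : ℂ) (R : ℝ) :
    circleAverage (fun z ↦ conj (g z)) c R = conj (circleAverage g c R) := by
  simp only [circleAverage, intervalIntegral.integral_of_le two_pi_pos.le,
    _root_.integral_conj, Complex.real_smul, map_mul, conj_ofReal]

theorem inv_sub_eq_conj_div_sq_of_mem_sphere {z : ℂ} (hz : z ∈ sphere c r) :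
    (z - c)⁻¹ = conj (z - c) / (r : ℂ) ^ 2 := by
  rw [Complex.inv_def, normSq_eq_norm_sq, ← Complex.dist_eq, mem_sphere.1 hz, div_eq_mul_inv]
  push_cast
  ring

theorem continuousOn_inv_sub_pow_sphere (hr : 0 < r) (n : ℕ) :
    ContinuousOn (fun z ↦ (z - c)⁻¹ ^ n) (sphere c r) :=
  ((continuousOn_id.sub continuousOn_const).inv₀ fun _ hz ↦
    sub_ne_zero.2 (ne_of_mem_sphere hz hr.ne')).pow n

theorem DifferentiableOn.circleAverage_eq {E : Type*} [NormedAddCommGroup E] [NormedSpace ℂ E]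
    [CompleteSpace E] {g : ℂ → E} (hr : 0 < r) (hg : DifferentiableOn ℂ g (closedBall c r)) :
    circleAverage g c r = g c := by
  rw [← abs_of_pos hr] at hg
  exact (hg.mono closure_ball_subset_closedBall).diffContOnCl.circleAverage

theorem iteratedDeriv_div_factorial_eq_circleAverage (hr : 0 < r)
    (hf : DifferentiableOn ℂ f (closedBall c r)) (n : ℕ) :
    iteratedDeriv n f c / n.factorial = circleAverage (fun z ↦ (z - c)⁻¹ ^ n * f z) c r := by
  rw [circleAverage_eq_circleIntegral hr.ne']
  have hcauchy := hf.circleIntegral_one_div_sub_center_pow_smul hr n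
  simp only [smul_eq_mul] at hcauchy ⊢
  calc iteratedDeriv n f c / n.factorial
      = (2 * π * I)⁻¹ * ((2 * π * I / n.factorial) * iteratedDeriv n f c) := by
        field_simp [two_pi_I_ne_zero]
    _ = _ := by
        rw [← hcauchy]
        congr 2
        funext z
        rw [one_div, pow_succ, mul_inv, inv_pow]
        ring

theorem circleAverage_sub_pow_mul_eq_zero (hr : 0 < r)
    (hf : DifferentiableOn ℂ f (closedBall c r)) {n : ℕ} (hn : n ≠ 0) :
    circleAverage (fun z ↦ (z - c) ^ n * f z) c r = 0 := by
  have hg : DifferentiableOn ℂ (fun z ↦ (z - c) ^ n * f z) (closedBall c r) :=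
    ((differentiableOn_id.sub_const c).pow n).mul hf
  rw [hg.circleAverage_eq hr, sub_self, zero_pow hn, zero_mul]

theorem circleAverage_inv_sub_pow_mul_conj_eq_zero (hr : 0 < r)
    (hf : DifferentiableOn ℂ f (closedBall c r)) {n : ℕ} (hn : n ≠ 0) :
    circleAverage (fun z ↦ (z - c)⁻¹ ^ n * conj (f z)) c r = 0 := by
  have hsphere : Set.EqOn (fun z ↦ (z - c)⁻¹ ^ n * conj (f z))
      (fun z ↦ conj (((r : ℂ) ^ 2)⁻¹ ^ n • ((z - c) ^ n * f z))) (sphere c |r|) := by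
    intro z hz
    rw [abs_of_pos hr] at hz
    simp only [smul_eq_mul, map_mul, map_pow, map_inv₀, conj_ofReal,
      inv_sub_eq_conj_div_sq_of_mem_sphere hz]
    ring
  rw [circleAverage_congr_sphere hsphere, circleAverage_conj, circleAverage_fun_smul,
    circleAverage_sub_pow_mul_eq_zero hr hf hn, smul_zero, map_zero]

theorem iteratedDeriv_div_factorial_eq_circleAverage_re (hr : 0 < r)
    (hf : DifferentiableOn ℂ f (closedBall c r)) {n : ℕ} (hn : n ≠ 0) :
    iteratedDeriv n f c / n.factorial =
      circleAverage (fun z ↦ (z - c)⁻¹ ^ n * ((2 * (f z).re : ℝ) : ℂ)) c r := by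
  have hf' : ContinuousOn f (sphere c r) := hf.continuousOn.mono sphere_subset_closedBall
  have hint : CircleIntegrable (fun z ↦ (z - c)⁻¹ ^ n * f z) c r :=
    ((continuousOn_inv_sub_pow_sphere hr n).mul hf').circleIntegrable hr.le
  have hint_conj : CircleIntegrable (fun z ↦ (z - c)⁻¹ ^ n * conj (f z)) c r :=
    ((continuousOn_inv_sub_pow_sphere hr n).mul
      (continuous_conj.comp_continuousOn hf')).circleIntegrable hr.le
  rw [iteratedDeriv_div_factorial_eq_circleAverage hr hf n, ← add_zero (circleAverage _ c r),
    ← circleAverage_inv_sub_pow_mul_conj_eq_zero hr hf hn, ← circleAverage_fun_add hint hint_conj]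
  congr 1
  funext z
  rw [← mul_add, add_conj]

theorem norm_iteratedDeriv_div_factorial_mul_pow_le (hr : 0 < r)
    (hf : DifferentiableOn ℂ f (closedBall c r)) (hre : ∀ z ∈ sphere c r, 0 ≤ (f z).re)
    {n : ℕ} (hn : n ≠ 0) :
    ‖iteratedDeriv n f c / n.factorial‖ * r ^ n ≤ 2 * (f c).re := by
  have hmean : circleAverage (fun z ↦ (f z).re) c r = (f c).re := by
    rw [← hf.circleAverage_eq hr]
    exact reCLM.circleAverage_comp_comm
      ((hf.continuousOn.mono sphere_subset_closedBall).circleIntegrable hr.le)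
  have hnorm : Set.EqOn (fun z ↦ ‖(z - c)⁻¹ ^ n * ((2 * (f z).re : ℝ) : ℂ)‖)
      (fun z ↦ (r⁻¹ ^ n * 2) • (f z).re) (sphere c |r|) := by
    intro z hz
    rw [abs_of_pos hr] at hz
    simp only [norm_mul, norm_pow, norm_inv, ← Complex.dist_eq, mem_sphere.1 hz, norm_real,
      Real.norm_of_nonneg (mul_nonneg zero_le_two (hre z hz)), smul_eq_mul]
    ring
  calc ‖iteratedDeriv n f c / n.factorial‖ * r ^ n
      = ‖circleAverage (fun z ↦ (z - c)⁻¹ ^ n * ((2 * (f z).re : ℝ) : ℂ)) c r‖ * r ^ n := by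
        rw [iteratedDeriv_div_factorial_eq_circleAverage_re hr hf hn]
    _ ≤ circleAverage (fun z ↦ ‖(z - c)⁻¹ ^ n * ((2 * (f z).re : ℝ) : ℂ)‖) c r * r ^ n := by
        gcongr
        exact norm_circleAverage_le_circleAverage_norm _ c r
    _ = r⁻¹ ^ n * 2 * (f c).re * r ^ n := by
        rw [circleAverage_congr_sphere hnorm, circleAverage_fun_smul, hmean, smul_eq_mul]
    _ = 2 * (f c).re := by
        rw [inv_pow]
        field_simp

end CircleAverage

theorem stmt_7 (h : ℂ → ℂ) (hd : DifferentiableOn ℂ h (ball (0 : ℂ) 1))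
    (hre : ∀ w ∈ ball (0 : ℂ) 1, 0 ≤ (h w).re) (m : ℕ) (hm : 1 ≤ m) :
    ‖iteratedDeriv m h 0 / (m.factorial : ℂ)‖ ≤ 2 * (h 0).re := by
  set a := ‖iteratedDeriv m h 0 / (m.factorial : ℂ)‖
  have hlim : Tendsto (fun r : ℝ ↦ a * r ^ m) (𝓝[<] 1) (𝓝 a) :=
    ((by fun_prop : Continuous fun r : ℝ ↦ a * r ^ m).tendsto' 1 a (by simp)).mono_left
      nhdsWithin_le_nhds
  refine le_of_tendsto hlim ?_
  filter_upwards [Ioo_mem_nhdsLT zero_lt_one] with r ⟨hr0, hr1⟩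
  have hsub : closedBall (0 : ℂ) r ⊆ ball 0 1 := closedBall_subset_ball hr1
  exact norm_iteratedDeriv_div_factorial_mul_pow_le hr0 (hd.mono hsub)
    (fun z hz ↦ hre z (hsub (sphere_subset_closedBall hz))) (by omega)
end

section
/- Define the x-th Dirichlet–Bohr radius L(x) as the supremum of all r ∈ [0,1] such that for every finitely supported sequence (a_n)_{n≤x} of complex numbers, Σ_{n≤x} |a_n| r^{Ω(n)} ≤ sup_{t∈ℝ} |Σ_{n≤x} a_n n^{−it}|. Then there is a constant C > 0 such that for all x ≥ 2, L(x) ≤ C · (log x)^(1/4) / x^(1/8). -/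
/-!
Enumerate the primes `p_0, …, p_{N-1}` up to `√x` (so `N = π(√x)`) and give `n = p_j p_k` the
coefficient `e(jk/N)`, summed over the ordered pairs `(j, k)` with that product. By unique
factorisation these pairs are `(j, k)` and `(k, j)`, so `|a_n|` counts them and
`∑ |a_n| r^Ω(n) = N² r²`. On the other hand `∑ a_n n^{-it} = ∑_{j,k} e(jk/N) u_j u_k` with
`u_j = p_j^{-it}` unimodular, and the discrete Fourier matrix is `√N` times a unitary one, so this
is at most `N^{3/2}` for every `t`. Hence every admissible `r` has `r⁴ N ≤ 1`, and Chebyshev's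
bound `π(y) ≫ y / log y` turns this into `r ≪ (log x)^{1/4} x^{-1/8}`.
-/

/-- The `x`-th Dirichlet–Bohr radius: the supremum of all `r ∈ [0,1]` such that
for every choice of coefficients `a : ℕ → ℂ`,
`∑_{n ≤ x} |a n| r^{Ω(n)} ≤ sup_{t ∈ ℝ} |∑_{n ≤ x} a n · n^{-it}|`. -/
noncomputable def dirichletBohrRadius (x : ℝ) : ℝ :=
  sSup {r : ℝ | 0 ≤ r ∧ r ≤ 1 ∧ ∀ a : ℕ → ℂ,
    ∑ n ∈ Finset.Icc 1 ⌊x⌋₊,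
        ‖a n‖ * r ^ (Nat.primeFactorsList n).length
      ≤ ⨆ t : ℝ, ‖∑ n ∈ Finset.Icc 1 ⌊x⌋₊,
          a n * Complex.exp (-(Complex.I * (t : ℂ) * (Real.log n : ℂ)))‖}

open Finset Real

namespace ZMod

variable {N : ℕ} [NeZero N]

theorem sum_norm_sq_sum_stdAddChar_mul (v : ZMod N → ℂ) :
    ∑ j, ‖∑ k, stdAddChar (j * k) * v k‖ ^ 2 = N * ∑ k, ‖v k‖ ^ 2 := by
  apply Complex.ofReal_injective
  have hconj (j k : ZMod N) : starRingEnd ℂ (stdAddChar (j * k)) = stdAddChar (-(j * k)) :=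
    (AddChar.map_neg_eq_conj _ _).symm
  have horth (k l : ZMod N) :
      ∑ j : ZMod N, stdAddChar (j * (k - l)) = if k - l = 0 then (N : ℂ) else 0 := by
    rw [AddChar.sum_mulShift _ (isPrimitive_stdAddChar N), ZMod.card]; split_ifs <;> simp
  have hterm (j k l : ZMod N) :
      stdAddChar (j * k) * v k * (stdAddChar (-(j * l)) * starRingEnd ℂ (v l))
        = stdAddChar (j * (k - l)) * (v k * starRingEnd ℂ (v l)) := by
    rw [mul_sub, sub_eq_add_neg, AddChar.map_add_eq_mul]; ring
  push_cast
  simp_rw [← Complex.mul_conj', map_sum, map_mul, hconj, sum_mul_sum, hterm]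
  rw [sum_comm, sum_congr rfl fun k _ => sum_comm]
  simp_rw [← sum_mul, horth, sub_eq_zero, ite_mul, zero_mul, sum_ite_eq, mem_univ, if_true,
    mul_sum]

theorem norm_sum_sum_stdAddChar_mul_le (u v : ZMod N → ℂ) (hu : ∀ j, ‖u j‖ ≤ 1)
    (hv : ∀ k, ‖v k‖ ≤ 1) :
    ‖∑ j, ∑ k, stdAddChar (j * k) * (u j * v k)‖ ≤ N * √N := by
  set V : ZMod N → ℂ := fun j => ∑ k, stdAddChar (j * k) * v k
  have hV : ∑ j, ‖V j‖ ^ 2 ≤ N * N := by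
    rw [sum_norm_sq_sum_stdAddChar_mul]
    gcongr
    calc ∑ k, ‖v k‖ ^ 2 ≤ ∑ _k : ZMod N, (1 : ℝ) := by
          gcongr with k; exact pow_le_one₀ (norm_nonneg _) (hv k)
      _ = N := by simp
  have hCS : (∑ j, ‖V j‖) ^ 2 ≤ N * ∑ j, ‖V j‖ ^ 2 := by
    simpa using sq_sum_le_card_mul_sum_sq (s := univ) (f := fun j => ‖V j‖)
  calc ‖∑ j, ∑ k, stdAddChar (j * k) * (u j * v k)‖ = ‖∑ j, u j * V j‖ := by
        simp_rw [V, mul_sum]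
        congr 1
        exact sum_congr rfl fun j _ => sum_congr rfl fun k _ => by ring
    _ ≤ ∑ j, ‖V j‖ := by
        refine (norm_sum_le _ _).trans (sum_le_sum fun j _ => ?_)
        rw [norm_mul]; exact mul_le_of_le_one_left (norm_nonneg _) (hu j)
    _ ≤ N * √N := by
        refine (pow_le_pow_iff_left₀ (by positivity) (by positivity) two_ne_zero).1 ?_
        rw [mul_pow, sq_sqrt (Nat.cast_nonneg _)]
        nlinarith

end ZMod

theorem Nat.Prime.mul_eq_mul_iff {p q p' q' : ℕ} (hp : p.Prime) (hp' : p'.Prime)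
    (hq' : q'.Prime) : p * q = p' * q' ↔ p = p' ∧ q = q' ∨ p = q' ∧ q = p' := by
  refine ⟨fun h => ?_, by rintro (⟨rfl, rfl⟩ | ⟨rfl, rfl⟩) <;> ring⟩
  rcases (Nat.Prime.dvd_mul hp).mp (Dvd.intro q h) with h' | h'
  · obtain rfl := (Nat.prime_dvd_prime_iff_eq hp hp').mp h'
    exact .inl ⟨rfl, Nat.eq_of_mul_eq_mul_left hp.pos h⟩
  · obtain rfl := (Nat.prime_dvd_prime_iff_eq hp hq').mp h'
    exact .inr ⟨rfl, Nat.eq_of_mul_eq_mul_left hp.pos (h.trans (mul_comm _ _))⟩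

theorem Nat.Prime.primeFactorsList_mul_length {p q : ℕ} (hp : p.Prime) (hq : q.Prime) :
    (p * q).primeFactorsList.length = 2 := by
  rw [(Nat.perm_primeFactorsList_mul hp.ne_zero hq.ne_zero).length_eq, List.length_append,
    Nat.primeFactorsList_prime hp, Nat.primeFactorsList_prime hq]
  rfl

noncomputable def dirichletSum (X : ℕ) (a : ℕ → ℂ) (t : ℝ) : ℂ :=
  ∑ n ∈ Icc 1 X, a n * Complex.exp (-(Complex.I * (t : ℂ) * (Real.log n : ℂ)))

def IsBohrAdmissible (X : ℕ) (r : ℝ) : Prop :=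
  ∀ a : ℕ → ℂ, ∑ n ∈ Icc 1 X, ‖a n‖ * r ^ (Nat.primeFactorsList n).length
    ≤ ⨆ t : ℝ, ‖dirichletSum X a t‖

section pairCoeff

variable {ι : Type*} [Fintype ι] (p : ι → ℕ)

def pairFiber (n : ℕ) : Finset (ι × ι) := {jk | p jk.1 * p jk.2 = n}

def pairCoeff (c : ι → ι → ℂ) (n : ℕ) : ℂ := ∑ jk ∈ pairFiber p n, c jk.1 jk.2

variable {p}

theorem sum_sum_pairFiber {M : Type*} [AddCommMonoid M] {X : ℕ}
    (hp : ∀ j k, p j * p k ∈ Icc 1 X) (f : ι × ι → M) :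
    ∑ n ∈ Icc 1 X, ∑ jk ∈ pairFiber p n, f jk = ∑ jk, f jk :=
  sum_fiberwise_of_maps_to (fun jk _ => hp jk.1 jk.2) f

theorem sum_pairCoeff_mul {X : ℕ} (hp : ∀ j k, p j * p k ∈ Icc 1 X) (c : ι → ι → ℂ)
    (g : ℕ → ℂ) :
    ∑ n ∈ Icc 1 X, pairCoeff p c n * g n = ∑ j, ∑ k, c j k * g (p j * p k) := by
  rw [← Fintype.sum_prod_type', ← sum_sum_pairFiber hp]
  refine sum_congr rfl fun n _ => ?_
  rw [pairCoeff, sum_mul]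
  exact sum_congr rfl fun jk hjk => by rw [(mem_filter.1 hjk).2]

theorem norm_pairCoeff (hinj : Function.Injective p) (hprime : ∀ j, (p j).Prime)
    {c : ι → ι → ℂ} (hsymm : ∀ j k, c j k = c k j) (hc : ∀ j k, ‖c j k‖ = 1) (n : ℕ) :
    ‖pairCoeff p c n‖ = #(pairFiber p n) := by
  rcases (pairFiber p n).eq_empty_or_nonempty with hn | ⟨⟨j, k⟩, hjk⟩
  · simp [pairCoeff, hn]
  have hconst : ∀ jk ∈ pairFiber p n, c jk.1 jk.2 = c j k := by
    rintro ⟨j', k'⟩ hjk'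
    simp only [pairFiber, mem_filter, mem_univ, true_and] at hjk hjk'
    rcases ((hprime j').mul_eq_mul_iff (hprime j) (hprime k)).1 (hjk'.trans hjk.symm) with
      ⟨h₁, h₂⟩ | ⟨h₁, h₂⟩
    · rw [hinj h₁, hinj h₂]
    · rw [hinj h₁, hinj h₂, hsymm]
  rw [pairCoeff, sum_congr rfl hconst, sum_const, nsmul_eq_mul, norm_mul, hc, mul_one,
    Complex.norm_natCast]

theorem sum_norm_pairCoeff_mul_pow (hinj : Function.Injective p) (hprime : ∀ j, (p j).Prime)
    {c : ι → ι → ℂ} (hsymm : ∀ j k, c j k = c k j) (hc : ∀ j k, ‖c j k‖ = 1) {X : ℕ}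
    (hp : ∀ j k, p j * p k ∈ Icc 1 X) (r : ℝ) :
    ∑ n ∈ Icc 1 X, ‖pairCoeff p c n‖ * r ^ (Nat.primeFactorsList n).length
      = Fintype.card ι ^ 2 * r ^ 2 := by
  calc ∑ n ∈ Icc 1 X, ‖pairCoeff p c n‖ * r ^ (Nat.primeFactorsList n).length
      = ∑ n ∈ Icc 1 X, ∑ jk ∈ pairFiber p n,
          r ^ (Nat.primeFactorsList (p jk.1 * p jk.2)).length := by
        refine sum_congr rfl fun n _ => ?_
        rw [norm_pairCoeff hinj hprime hsymm hc, ← nsmul_eq_mul, ← sum_const]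
        exact sum_congr rfl fun jk hjk => by rw [(mem_filter.1 hjk).2]
    _ = ∑ _jk : ι × ι, r ^ 2 := by
        rw [sum_sum_pairFiber hp]
        exact sum_congr rfl fun jk _ => by
          rw [(hprime jk.1).primeFactorsList_mul_length (hprime jk.2)]
    _ = Fintype.card ι ^ 2 * r ^ 2 := by simp [sq]

end pairCoeff

theorem succ_pow_six_le_thirty_two_pow {n : ℕ} (hn : 2 ≤ n) : (n + 1) ^ 6 ≤ 32 ^ n := by
  induction n, hn using Nat.le_induction with
  | base => norm_num
  | succ n hn ih =>
    have h : 729 * (n + 2) ^ 6 ≤ 4096 * (n + 1) ^ 6 := by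
      simpa [mul_pow] using Nat.pow_le_pow_left (show 3 * (n + 2) ≤ 4 * (n + 1) by omega) 6
    calc (n + 2) ^ 6 ≤ 32 * (n + 1) ^ 6 := by linarith [Nat.zero_le ((n + 1) ^ 6)]
      _ ≤ 32 ^ (n + 1) := by rw [pow_succ' 32 n]; exact Nat.mul_le_mul_left 32 ih

theorem le_primeCounting_mul_log {n : ℕ} (hn : 2 ≤ n) :
    log 2 / 6 * n ≤ n.primeCounting * log n := by
  have hlog : 0 < log n := log_pos (by exact_mod_cast hn)
  -- absorbs the error term `log (n + 1)` of `Chebyshev.pi_ge` into a sixth of its main term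
  have hsucc : log (n + 1) ≤ 5 / 6 * n * log 2 := by
    have h : ((n + 1 : ℕ) : ℝ) ^ 6 ≤ ((2 : ℕ) : ℝ) ^ (5 * n) := by
      rw [pow_mul]; exact_mod_cast succ_pow_six_le_thirty_two_pow hn
    have h' := log_le_log (by positivity) h
    rw [log_pow, log_pow] at h'
    push_cast at h'
    linarith
  have hpi := (div_le_iff₀ hlog).1 (Chebyshev.pi_ge n)
  linarith

theorem IsBohrAdmissible.pow_four_mul_le_one {X : ℕ} {r : ℝ} (hr : IsBohrAdmissible X r)
    {N : ℕ} [NeZero N] {p : ZMod N → ℕ} (hinj : Function.Injective p)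
    (hprime : ∀ j, (p j).Prime) (hX : ∀ j k, p j * p k ≤ X) : r ^ 4 * N ≤ 1 := by
  set c : ZMod N → ZMod N → ℂ := fun j k => ZMod.stdAddChar (j * k)
  have hc : ∀ j k, ‖c j k‖ = 1 := fun j k => AddChar.norm_apply _ _
  have hsymm : ∀ j k, c j k = c k j := fun j k => by simp only [c, mul_comm]
  have hp : ∀ j k, p j * p k ∈ Icc 1 X := fun j k =>
    mem_Icc.2 ⟨Nat.one_le_iff_ne_zero.2 (mul_ne_zero (hprime j).ne_zero (hprime k).ne_zero), hX j k⟩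
  have hN : (0 : ℝ) < N := Nat.cast_pos.2 (Nat.pos_of_neZero N)
  have hsum : (N : ℝ) ^ 2 * r ^ 2 ≤ N * √N := by
    have hL := sum_norm_pairCoeff_mul_pow hinj hprime hsymm hc hp r
    rw [ZMod.card] at hL
    rw [← hL]
    refine (hr (pairCoeff p c)).trans (Real.iSup_le (fun t => ?_) (by positivity))
    set u : ZMod N → ℂ := fun j => Complex.exp (-(Complex.I * t * Real.log (p j)))
    have hu : ∀ j, ‖u j‖ ≤ 1 := fun j => by
      rw [show u j = Complex.exp (((-(t * Real.log (p j)) : ℝ) : ℂ) * Complex.I) by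
        simp only [u]; push_cast; ring_nf, Complex.norm_exp_ofReal_mul_I]
    have hsplit (j k : ZMod N) :
        Complex.exp (-(Complex.I * t * Real.log ((p j * p k : ℕ) : ℝ))) = u j * u k := by
      rw [Nat.cast_mul, Real.log_mul (by exact_mod_cast (hprime j).ne_zero)
        (by exact_mod_cast (hprime k).ne_zero), ← Complex.exp_add]
      push_cast
      ring_nf
    rw [dirichletSum, sum_pairCoeff_mul hp]
    simp_rw [hsplit]
    exact ZMod.norm_sum_sum_stdAddChar_mul_le u u hu hu
  have h4 := pow_le_pow_left₀ (by positivity) hsum 2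
  rw [mul_pow, mul_pow, Real.sq_sqrt hN.le] at h4
  have hN3 : (N : ℝ) ^ 3 * (r ^ 4 * N) ≤ N ^ 3 * 1 := by nlinarith
  exact le_of_mul_le_mul_left hN3 (by positivity)

theorem IsBohrAdmissible.pow_four_mul_primeCounting_le_one {X : ℕ} {r : ℝ}
    (hr : IsBohrAdmissible X r) : r ^ 4 * (Nat.sqrt X).primeCounting ≤ 1 := by
  set N := (Nat.sqrt X).primeCounting
  rcases Nat.eq_zero_or_pos N with hN | hN
  · simp [hN]
  have : NeZero N := ⟨hN.ne'⟩
  have hle : ∀ j : ZMod N, Nat.nth Nat.Prime j.val ≤ Nat.sqrt X := fun j =>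
    Nat.lt_succ_iff.1 (Nat.nth_lt_of_lt_count (ZMod.val_lt j))
  exact hr.pow_four_mul_le_one
    ((Nat.nth_strictMono Nat.infinite_setOfPred_prime).injective.comp (ZMod.val_injective N))
    (fun j => Nat.prime_nth_prime _)
    fun j k => (Nat.mul_le_mul (hle j) (hle k)).trans (Nat.sqrt_le X)

theorem IsBohrAdmissible.pow_four_mul_sqrt_le {x r : ℝ} (hx : 2 ≤ x) (hr0 : 0 ≤ r) (hr1 : r ≤ 1)
    (hr : IsBohrAdmissible ⌊x⌋₊ r) : r ^ 4 * √x ≤ 6 / log 2 * log x := by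
  set m := Nat.sqrt ⌊x⌋₊
  have hlog2 : 0 < log 2 := log_pos one_lt_two
  have hfloor : 2 ≤ ⌊x⌋₊ := Nat.le_floor (by exact_mod_cast hx)
  have hm1 : 1 ≤ m := Nat.le_sqrt.2 (by omega)
  have hsqrt : √x ≤ 2 * m := by
    have h1 : x < ⌊x⌋₊ + 1 := Nat.lt_floor_add_one x
    have h2 : ⌊x⌋₊ + 1 ≤ (m + 1) ^ 2 := Nat.lt_succ_sqrt' _
    have h3 : ((⌊x⌋₊ + 1 : ℕ) : ℝ) ≤ ((m + 1) ^ 2 : ℕ) := by exact_mod_cast h2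
    have h4 : (1 : ℝ) ≤ m := by exact_mod_cast hm1
    push_cast at h3
    rw [Real.sqrt_le_iff]
    constructor <;> nlinarith
  have hlogm : 2 * log m ≤ log x := by
    have h1 : ((m ^ 2 : ℕ) : ℝ) ≤ x :=
      (Nat.cast_le.2 (Nat.sqrt_le' _)).trans (Nat.floor_le (by linarith))
    have h2 : (0 : ℝ) < m := by exact_mod_cast hm1
    have h3 := log_le_log (by positivity) h1
    rwa [Nat.cast_pow, log_pow, Nat.cast_ofNat] at h3
  have hlogx : log 2 ≤ log x := log_le_log two_pos hx
  rcases hm1.eq_or_lt with hm | hm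
  · rw [← hm] at hsqrt
    have hleft : r ^ 4 * √x ≤ 1 * 2 :=
      mul_le_mul (pow_le_one₀ hr0 hr1) (by simpa using hsqrt) (sqrt_nonneg _) zero_le_one
    have hright : 6 ≤ 6 / log 2 * log x := by
      rw [div_mul_eq_mul_div, le_div_iff₀ hlog2]; linarith
    linarith
  · have hπ := hr.pow_four_mul_primeCounting_le_one
    have hcheb := le_primeCounting_mul_log hm
    have hm' : (m : ℝ) ≤ 6 / log 2 * (m.primeCounting * log m) := by
      rw [div_mul_eq_mul_div, le_div_iff₀ hlog2]; linarith
    have hlogm0 : 0 ≤ log m := log_natCast_nonneg m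
    calc r ^ 4 * √x ≤ r ^ 4 * (2 * (6 / log 2 * (m.primeCounting * log m))) := by
          gcongr; linarith
      _ = 6 / log 2 * (2 * log m) * (r ^ 4 * m.primeCounting) := by ring
      _ ≤ 6 / log 2 * (2 * log m) * 1 := by gcongr
      _ ≤ 6 / log 2 * log x := by rw [mul_one]; gcongr

theorem stmt_15 :
    ∃ C : ℝ, 0 < C ∧ ∀ x : ℝ, 2 ≤ x →
      dirichletBohrRadius x ≤ C * ((Real.log x) ^ ((1 : ℝ)/4) / x ^ ((1 : ℝ)/8)) := by
  have hlog2 : 0 < log 2 := log_pos one_lt_two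
  refine ⟨(6 / log 2) ^ (1 / 4 : ℝ), by positivity, fun x hx => ?_⟩
  have hx0 : 0 < x := by linarith
  have hlogx : 0 < log x := log_pos (by linarith)
  have hrhs : (6 / log 2) ^ (1 / 4 : ℝ) * (log x ^ (1 / 4 : ℝ) / x ^ (1 / 8 : ℝ))
      = (6 / log 2 * log x / √x) ^ (1 / 4 : ℝ) := by
    rw [div_rpow (by positivity) (sqrt_nonneg x), mul_rpow (by positivity) hlogx.le, sqrt_eq_rpow,
      ← rpow_mul hx0.le, mul_div_assoc]
    norm_num
  rw [hrhs]
  refine Real.sSup_le (fun r ⟨hr0, hr1, hr⟩ => ?_) (by positivity)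
  have h := IsBohrAdmissible.pow_four_mul_sqrt_le hx hr0 hr1 hr
  calc r = (r ^ 4) ^ (1 / 4 : ℝ) := by
        conv_lhs => rw [← pow_rpow_inv_natCast hr0 four_ne_zero]
        norm_num
    _ ≤ (6 / log 2 * log x / √x) ^ (1 / 4 : ℝ) :=
        rpow_le_rpow (by positivity) ((le_div_iff₀ (sqrt_pos.2 hx0)).2 h) (by norm_num)
end

section
/- Bohr's inequality for primes: for every finitely supported sequence (a_p) of complex numbers indexed by the primes, Σ_p |a_p| ≤ sup_{t∈ℝ} |Σ_p a_p p^{−it}|. -/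
/-!
Bohr's power trick. If the frequencies `ωᵢ` are linearly independent over `ℕ`, the `k`-th power of
`f t = ∑ aᵢ exp (i ωᵢ t)` expands, by the multinomial theorem, into a sum over exponent vectors `e`
with pairwise distinct frequencies `∑ eᵢ ωᵢ`, and the norms of its coefficients add up to
`(∑ ‖aᵢ‖) ^ k`. The mean value of `|f ^ k|²` over `[0, T]` tends to the sum of the squared norms of
these coefficients, which is therefore at most `(sup |f|) ^ (2k)`. Cauchy–Schwarz over the at most
`(k + 1) ^ n` exponent vectors gives `(∑ ‖aᵢ‖) ^ (2k) ≤ (k + 1) ^ n (sup |f|) ^ (2k)`, and the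
polynomial factor disappears as `k → ∞`. For the primes, the independence of the `log p` is unique
factorization.
-/

open Complex ComplexConjugate Finset Filter

lemma norm_integral_exp_mul_I_le {ω : ℝ} (hω : ω ≠ 0) (T : ℝ) :
    ‖∫ t in (0 : ℝ)..T, exp (ω * t * I)‖ ≤ 2 / |ω| := by
  have hc : (ω : ℂ) * I ≠ 0 := mul_ne_zero (ofReal_ne_zero.2 hω) I_ne_zero
  simp_rw [mul_right_comm (ω : ℂ) _ I]
  rw [integral_exp_mul_complex hc, norm_div, norm_mul, norm_I, norm_real,
    mul_one, Real.norm_eq_abs]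
  gcongr
  calc ‖exp (ω * I * T) - exp (ω * I * (0 : ℝ))‖
      ≤ ‖exp (ω * T * I)‖ + ‖exp (ω * (0 : ℝ) * I)‖ := by
        simpa only [mul_right_comm _ I] using norm_sub_le _ _
    _ = 2 := by
        rw [← ofReal_mul, ← ofReal_mul, norm_exp_ofReal_mul_I, norm_exp_ofReal_mul_I]
        norm_num

section MeanValue

variable {ι : Type*}

lemma integral_sum_exp_mul_conj (M : Finset ι) (ω : ι → ℝ) (b : ι → ℂ) (T : ℝ) :
    ∫ t in (0 : ℝ)..T, (∑ i ∈ M, b i * exp (ω i * t * I)) *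
        conj (∑ i ∈ M, b i * exp (ω i * t * I)) =
      ∑ i ∈ M, ∑ j ∈ M, b i * conj (b j) * ∫ t in (0 : ℝ)..T, exp ((ω i - ω j : ℝ) * t * I) := by
  have hconj (x t : ℝ) : conj (exp (x * t * I)) = exp (-x * t * I) := by
    rw [← exp_conj]; simp [map_mul, conj_I, conj_ofReal]
  have hexp (i j : ι) (t : ℝ) :
      exp (ω i * t * I) * conj (exp (ω j * t * I)) = exp ((ω i - ω j : ℝ) * t * I) := by
    rw [hconj, ← exp_add]; push_cast; ring_nf
  simp_rw [map_sum, sum_mul_sum, map_mul, ← intervalIntegral.integral_const_mul]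
  rw [intervalIntegral.integral_finsetSum fun i _ => ?_]
  · refine sum_congr rfl fun i _ => ?_
    rw [intervalIntegral.integral_finsetSum fun j _ => ?_]
    · refine sum_congr rfl fun j _ => intervalIntegral.integral_congr fun t _ => ?_
      rw [← hexp]; ring
    · exact Continuous.intervalIntegrable (by fun_prop) _ _
  · exact Continuous.intervalIntegrable (by fun_prop) _ _

lemma exists_norm_integral_sum_exp_mul_conj_sub_le (M : Finset ι) {ω : ι → ℝ}
    (hω : Set.InjOn ω M) (b : ι → ℂ) :
    ∃ C, ∀ T, ‖(∫ t in (0 : ℝ)..T, (∑ i ∈ M, b i * exp (ω i * t * I)) *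
        conj (∑ i ∈ M, b i * exp (ω i * t * I))) - T * ∑ i ∈ M, ‖b i‖ ^ 2‖ ≤ C := by
  classical
  refine ⟨∑ i ∈ M, ∑ j ∈ M.erase i, ‖b i‖ * ‖b j‖ * (2 / |ω i - ω j|), fun T => ?_⟩
  have hdiag (i : ι) : b i * conj (b i) * ∫ t in (0 : ℝ)..T, exp ((ω i - ω i : ℝ) * t * I) =
      T * ‖b i‖ ^ 2 := by
    simp [mul_conj', mul_comm]
  have hsplit : (∫ t in (0 : ℝ)..T, (∑ i ∈ M, b i * exp (ω i * t * I)) *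
        conj (∑ i ∈ M, b i * exp (ω i * t * I))) - T * ∑ i ∈ M, ‖b i‖ ^ 2 =
      ∑ i ∈ M, ∑ j ∈ M.erase i,
        b i * conj (b j) * ∫ t in (0 : ℝ)..T, exp ((ω i - ω j : ℝ) * t * I) := by
    rw [integral_sum_exp_mul_conj, ← sum_congr rfl fun i hi => add_sum_erase M _ hi,
      sum_add_distrib, sum_congr rfl fun i _ => hdiag i]
    push_cast
    rw [mul_sum, add_sub_cancel_left]
  rw [hsplit]
  refine (norm_sum_le _ _).trans (sum_le_sum fun i hi => (norm_sum_le _ _).trans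
    (sum_le_sum fun j hj => ?_))
  have hij : ω i - ω j ≠ 0 :=
    sub_ne_zero.2 fun h => ne_of_mem_erase hj (hω hi (mem_of_mem_erase hj) h).symm
  rw [norm_mul, norm_mul, RCLike.norm_conj]
  exact mul_le_mul_of_nonneg_left (norm_integral_exp_mul_I_le hij T) (by positivity)

lemma le_of_forall_pos_mul_le_mul_add {x y C : ℝ} (h : ∀ T > 0, x * T ≤ y * T + C) : x ≤ y := by
  by_contra! hxy
  have hpos : 0 < x - y := sub_pos.2 hxy
  have hT := h ((|C| + 1) / (x - y)) (by positivity)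
  have : (x - y) * ((|C| + 1) / (x - y)) = |C| + 1 := mul_div_cancel₀ _ hpos.ne'
  nlinarith [le_abs_self C]

theorem sum_norm_sq_le_of_forall_norm_sum_exp_le (M : Finset ι) {ω : ι → ℝ}
    (hω : Set.InjOn ω M) (b : ι → ℂ) {S : ℝ}
    (hS : ∀ t : ℝ, ‖∑ i ∈ M, b i * exp (ω i * t * I)‖ ≤ S) :
    ∑ i ∈ M, ‖b i‖ ^ 2 ≤ S ^ 2 := by
  obtain ⟨C, hC⟩ := exists_norm_integral_sum_exp_mul_conj_sub_le M hω b
  refine le_of_forall_pos_mul_le_mul_add (C := C) fun T hT => ?_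
  have hint : ‖∫ t in (0 : ℝ)..T, (∑ i ∈ M, b i * exp (ω i * t * I)) *
      conj (∑ i ∈ M, b i * exp (ω i * t * I))‖ ≤ S ^ 2 * T := by
    have := intervalIntegral.norm_integral_le_of_norm_le_const (a := 0) (b := T) (C := S ^ 2)
      (f := fun t : ℝ => (∑ i ∈ M, b i * exp (ω i * t * I)) *
        conj (∑ i ∈ M, b i * exp (ω i * t * I))) fun t _ => by
      rw [norm_mul, RCLike.norm_conj, ← sq]
      exact pow_le_pow_left₀ (norm_nonneg _) (hS t) 2
    rwa [sub_zero, abs_of_pos hT] at this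
  calc (∑ i ∈ M, ‖b i‖ ^ 2) * T = ‖(T : ℂ) * ∑ i ∈ M, ‖b i‖ ^ 2‖ := by
        norm_cast; rw [Real.norm_of_nonneg (by positivity), mul_comm]
    _ ≤ _ := norm_le_norm_add_norm_sub' _ _
    _ ≤ S ^ 2 * T + C := add_le_add hint ((norm_sub_rev _ _).trans_le (hC T))

end MeanValue

lemma sum_mul_exp_pow {α : Type*} [DecidableEq α] (s : Finset α) (a : α → ℂ) (ω : α → ℝ)
    (t : ℝ) (k : ℕ) :
    (∑ i ∈ s, a i * exp (ω i * t * I)) ^ k =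
      ∑ e ∈ piAntidiag s k, (Nat.multinomial s e * ∏ i ∈ s, a i ^ e i) *
        exp ((∑ i ∈ s, e i * ω i : ℝ) * t * I) := by
  rw [sum_pow_eq_sum_piAntidiag]
  refine sum_congr rfl fun e _ => ?_
  simp_rw [mul_pow, prod_mul_distrib, ← exp_nat_mul, ← exp_sum, mul_assoc]
  push_cast
  simp_rw [sum_mul, mul_assoc]

lemma Finset.card_piAntidiag_le {α : Type*} [DecidableEq α] (s : Finset α) (n : ℕ) :
    #(piAntidiag s n) ≤ (n + 1) ^ #s := by
  calc #(piAntidiag s n) ≤ #(s.pi fun _ => range (n + 1)) := by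
        refine card_le_card_of_injOn (fun e i _ => e i) (fun e he => ?_) fun e he e' he' h => ?_
        · rw [mem_coe, mem_piAntidiag] at he
          simp only [mem_coe, mem_pi, mem_range, Nat.lt_succ_iff]
          exact fun i hi => he.1 ▸ single_le_sum (fun _ _ => Nat.zero_le _) hi
        · rw [mem_coe, mem_piAntidiag] at he he'
          funext i
          by_cases hi : i ∈ s
          · exact congr_fun₂ h i hi
          · rw [not_imp_comm.1 (he.2 i) hi, not_imp_comm.1 (he'.2 i) hi]
    _ = (n + 1) ^ #s := by simp

lemma le_of_forall_pow_le_mul_pow {x y : ℝ} (hy : 0 ≤ y) (n : ℕ)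
    (h : ∀ k : ℕ, x ^ k ≤ ((k : ℝ) + 1) ^ n * y ^ k) : x ≤ y := by
  rcases hy.eq_or_lt with rfl | hy
  · simpa using h 1
  by_contra! hxy
  have hq : 1 < x / y := (one_lt_div hy).2 hxy
  have hlim := (tendsto_pow_const_div_const_pow_of_one_lt n hq).comp (tendsto_add_atTop_nat 1)
  have hbound (k : ℕ) : (x / y)⁻¹ ≤ ((k + 1 : ℕ) : ℝ) ^ n / (x / y) ^ (k + 1) := by
    have hqk : (x / y) ^ k ≤ ((k : ℝ) + 1) ^ n := by
      rw [div_pow, div_le_iff₀ (by positivity)]; exact h k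
    rw [pow_succ, ← div_div]
    push_cast
    rw [inv_eq_one_div]
    exact div_le_div_of_nonneg_right ((one_le_div (by positivity)).2 hqk) (by positivity)
  exact (inv_pos.2 (by linarith)).not_ge (ge_of_tendsto' hlim hbound)

theorem sum_norm_le_of_forall_norm_sum_exp_le {α : Type*} (s : Finset α) {ω : α → ℝ}
    (hω : Set.InjOn (fun e : α → ℕ => ∑ i ∈ s, (e i : ℝ) * ω i) {e | ∀ i, e i ≠ 0 → i ∈ s})
    (a : α → ℂ) {S : ℝ} (hS : ∀ t : ℝ, ‖∑ i ∈ s, a i * exp (ω i * t * I)‖ ≤ S) :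
    ∑ i ∈ s, ‖a i‖ ≤ S := by
  classical
  have hS0 : 0 ≤ S := (norm_nonneg _).trans (hS 0)
  have key (k : ℕ) : ((∑ i ∈ s, ‖a i‖) ^ 2) ^ k ≤ ((k : ℝ) + 1) ^ #s * (S ^ 2) ^ k := by
    let c (e : α → ℕ) : ℂ := Nat.multinomial s e * ∏ i ∈ s, a i ^ e i
    have hnorm : (∑ i ∈ s, ‖a i‖) ^ k = ∑ e ∈ piAntidiag s k, ‖c e‖ := by
      simp [c, sum_pow_eq_sum_piAntidiag, norm_prod]
    have hparseval : ∑ e ∈ piAntidiag s k, ‖c e‖ ^ 2 ≤ (S ^ k) ^ 2 :=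
      sum_norm_sq_le_of_forall_norm_sum_exp_le _ (hω.mono fun e he => (mem_piAntidiag.1 he).2) c
        fun t => by
          rw [← sum_mul_exp_pow, norm_pow]
          exact pow_le_pow_left₀ (norm_nonneg _) (hS t) k
    calc ((∑ i ∈ s, ‖a i‖) ^ 2) ^ k = (∑ e ∈ piAntidiag s k, ‖c e‖) ^ 2 := by
          rw [← pow_mul, mul_comm, pow_mul, hnorm]
      _ ≤ #(piAntidiag s k) * ∑ e ∈ piAntidiag s k, ‖c e‖ ^ 2 := sq_sum_le_card_mul_sum_sq
      _ ≤ ((k : ℝ) + 1) ^ #s * (S ^ k) ^ 2 := by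
          gcongr
          exact_mod_cast card_piAntidiag_le s k
      _ = ((k : ℝ) + 1) ^ #s * (S ^ 2) ^ k := by ring
  exact (pow_le_pow_iff_left₀ (by positivity) hS0 two_ne_zero).1
    (le_of_forall_pow_le_mul_pow (by positivity) _ key)

lemma Nat.factorization_prod_pow_apply {s : Finset ℕ} (hs : ∀ p ∈ s, p.Prime) (e : ℕ → ℕ)
    {q : ℕ} (hq : q ∈ s) : (∏ p ∈ s, p ^ e p).factorization q = e q := by
  rw [Nat.factorization_prod fun p hp => pow_ne_zero _ (hs p hp).ne_zero,
    Finsupp.finsetSum_apply, sum_congr rfl fun p hp => by rw [(hs p hp).factorization_pow]]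
  simp [Finsupp.single_apply, hq]

lemma injOn_sum_mul_log {s : Finset ℕ} (hs : ∀ p ∈ s, p.Prime) :
    Set.InjOn (fun e : ℕ → ℕ => ∑ p ∈ s, (e p : ℝ) * Real.log p) {e | ∀ p, e p ≠ 0 → p ∈ s} := by
  intro e he e' he' h
  have hlog (e : ℕ → ℕ) :
      ∑ p ∈ s, (e p : ℝ) * Real.log p = Real.log (∏ p ∈ s, p ^ e p : ℕ) := by
    push_cast
    rw [Real.log_prod fun p hp => pow_ne_zero _ (Nat.cast_ne_zero.2 (hs p hp).ne_zero)]
    simp_rw [Real.log_pow]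
  have hpos (e : ℕ → ℕ) : (0 : ℝ) < (∏ p ∈ s, p ^ e p : ℕ) :=
    Nat.cast_pos.2 (prod_pos fun p hp => pow_pos (hs p hp).pos _)
  have hprod : ∏ p ∈ s, p ^ e p = ∏ p ∈ s, p ^ e' p := by
    exact_mod_cast Real.log_injOn_pos (hpos e) (hpos e') ((hlog e).symm.trans (h.trans (hlog e')))
  funext q
  by_cases hq : q ∈ s
  · rw [← Nat.factorization_prod_pow_apply hs e hq, hprod,
      Nat.factorization_prod_pow_apply hs e' hq]
  · rw [not_imp_comm.1 (he q) hq, not_imp_comm.1 (he' q) hq]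

theorem stmt_17 (a : ℕ → ℂ) (hfin : (Function.support a).Finite)
    (hsupp : ∀ n, a n ≠ 0 → n.Prime) :
    ∑ᶠ p, ‖a p‖
      ≤ ⨆ t : ℝ, ‖∑ᶠ p, a p *
          Complex.exp (-(Complex.I * (t : ℂ) * (Real.log p : ℂ)))‖ := by
  set s := hfin.toFinset
  have hs : ∀ p ∈ s, p.Prime := fun p hp => hsupp p (hfin.mem_toFinset.1 hp)
  have hsum (t : ℝ) : ∑ᶠ p, a p * exp (-(I * t * Real.log p)) =
      ∑ p ∈ s, a p * exp (↑(-Real.log p) * t * I) := by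
    rw [finsum_eq_sum_of_support_subset _
      ((Function.support_mul_subset_left _ _).trans hfin.coe_toFinset.ge)]
    refine sum_congr rfl fun p _ => ?_
    push_cast
    ring_nf
  have hbound (t : ℝ) : ‖∑ p ∈ s, a p * exp (↑(-Real.log p) * t * I)‖ ≤ ∑ p ∈ s, ‖a p‖ :=
    (norm_sum_le _ _).trans_eq (by simp_rw [norm_mul, ← ofReal_mul, norm_exp_ofReal_mul_I, mul_one])
  rw [finsum_eq_sum_of_support_subset (fun p => ‖a p‖)
    ((Function.support_comp_subset norm_zero a).trans hfin.coe_toFinset.ge)]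
  simp_rw [hsum]
  refine sum_norm_le_of_forall_norm_sum_exp_le s
    (fun e he e' he' h => injOn_sum_mul_log hs he he' ?_) a
    fun t => le_ciSup ⟨_, Set.forall_mem_range.2 hbound⟩ t
  simpa only [mul_neg, sum_neg_distrib, neg_inj] using h
end
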